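/- Let N = 2^t with t ≥ 1 an integer and let α ∈ ℂ with α ≠ 0. Then the delay Vandermonde matrix satisfies the factorization A_{N,α} = P_N^T · diag(A_{N/2,α²}, A_{N/2,α²}) · diag(D̄_{N/2}, D̄_{N/2}) · B · D_N, where B = [[I_{N/2}, C_{N/2}^{N/2}], [D̃_{N/2}, α^{N/2}·C_{N/2}^{N/2}·D̃_{N/2}]], D̄_{N/2} = diag(α^{−2k})_{k=0}^{N/2−1}, D̃_{N/2} = diag(α^l)_{l=0}^{N/2−1}, D_N = diag(α^k)_{k=0}^{N−1}, and C_{N/2} is the companion matrix of p(z) = ∏_{k=0}^{N/2−1}(z − α^{2k}). -/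

import Mathlib

open Matrix

/-- Delay Vandermonde matrix: `(k,l)` entry `α ^ ((k+1)*l)` for `0 ≤ k,l ≤ N-1`,
i.e. the Vandermonde matrix with nodes `α, α², …, α^N`. -/
def DVM (N : ℕ) (α : ℂ) : Matrix (Fin N) (Fin N) ℂ :=
  Matrix.of fun k l => α ^ (((k : ℕ) + 1) * (l : ℕ))

/-- Even-odd permutation matrix of size `N` (with `N = n + n`): it maps a vector
`(x_0, x_1, …, x_{N-1})` to `(x_0, x_2, …, x_{N-2}, x_1, x_3, …, x_{N-1})`. -/
def evenOddPerm (N n : ℕ) : Matrix (Fin N) (Fin N) ℂ :=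
  Matrix.of fun i j =>
    if (j : ℕ) = (if (i : ℕ) < n then 2 * (i : ℕ) else 2 * ((i : ℕ) - n) + 1) then 1 else 0

/-- Companion matrix of the monic polynomial `z^n + ∑ i, w i * z^i`: ones on the
subdiagonal, last column `(-w 0, …, -w (n-1))ᵀ`, zeros elsewhere. -/
def companion (n : ℕ) (w : Fin n → ℂ) : Matrix (Fin n) (Fin n) ℂ :=
  Matrix.of fun i j =>
    if (i : ℕ) = (j : ℕ) + 1 then 1 else if (j : ℕ) = n - 1 then -w i else 0

/-!
Write `A_{N,α} = V D_N` with `V` the Vandermonde matrix of the nodes `α^k`. Sorting the rows of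
`V` into even and odd ones and splitting its columns into halves gives, with `W` the Vandermonde
matrix of the nodes `α^{2k}`, `Λ = diag(α^{2k})` and `D̃ = diag(α^l)`, the blocks
`[W | Λ^{N/2} W]` and, as the odd nodes are `α · α^{2k}`, `[W D̃ | α^{N/2} Λ^{N/2} W D̃]`.
The nodes `α^{2k}` are the roots of `p`, so `W C = Λ W` and `Λ^{N/2} W = W C^{N/2}`. Finally
`A_{N/2,α²} D̄ = W`, since the nodes of `A_{N/2,α²}` are `α² · α^{2k}`.
-/

open Finset

theorem vandermonde_semiconjBy_companion {n : ℕ} {v w : Fin n → ℂ}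
    (hv : ∀ i, v i ^ n + ∑ j : Fin n, w j * v i ^ (j : ℕ) = 0) :
    SemiconjBy (vandermonde v) (companion n w) (diagonal v) := by
  ext i j
  rw [mul_apply, diagonal_mul, vandermonde_apply]
  by_cases hj : (j : ℕ) = n - 1
  · have hcol : ∀ k : Fin n, companion n w k j = -w k := fun k => by
      have := k.isLt
      simp [companion, hj, show (k : ℕ) ≠ n - 1 + 1 by omega]
    have hn : n = (j : ℕ) + 1 := by have := j.isLt; omega
    simp only [vandermonde_apply, hcol, mul_comm (v i ^ _), neg_mul, sum_neg_distrib]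
    rw [← pow_succ', ← hn]
    linear_combination (hv i).symm
  · have hj' : (j : ℕ) + 1 < n := by have := j.isLt; omega
    have hcol : ∀ k : Fin n, companion n w k j = if k = ⟨j + 1, hj'⟩ then 1 else 0 :=
      fun k => by simp [companion, hj, Fin.ext_iff]
    simp [hcol, vandermonde_apply, pow_succ']

theorem vandermonde_mul_diagonal_pow {R : Type*} [CommRing R] {n : ℕ} (v : Fin n → R) (c : R) :
    vandermonde v * diagonal (fun j : Fin n => c ^ (j : ℕ)) =
      vandermonde (fun i => v i * c) := by
  ext i j
  simp [vandermonde_apply, mul_pow]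

theorem DVM_eq_vandermonde_mul_diagonal (N : ℕ) (α : ℂ) :
    DVM N α =
      vandermonde (fun k : Fin N => α ^ (k : ℕ)) * diagonal fun l : Fin N => α ^ (l : ℕ) := by
  rw [vandermonde_mul_diagonal_pow]
  ext k l
  simp [DVM, vandermonde_apply, ← pow_succ, ← pow_mul]

theorem DVM_sq_mul_diagonal_inv {α : ℂ} (hα : α ≠ 0) (n : ℕ) :
    DVM n (α ^ 2) * diagonal (fun k : Fin n => (α ^ (2 * (k : ℕ)))⁻¹) =
      vandermonde (fun k : Fin n => α ^ (2 * (k : ℕ))) := by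
  rw [DVM_eq_vandermonde_mul_diagonal, Matrix.mul_assoc, diagonal_mul_diagonal]
  simp [← pow_mul, hα]

section EvenOdd

variable {N n : ℕ}

def evenOddIndex (hNn : N = n + n) (i : Fin N) : Fin N :=
  ⟨if (i : ℕ) < n then 2 * i else 2 * (i - n) + 1, by have := i.isLt; split_ifs <;> omega⟩

theorem evenOddIndex_injective (hNn : N = n + n) : Function.Injective (evenOddIndex hNn) := by
  intro i j h
  have hi := i.isLt
  have hj := j.isLt
  simp only [evenOddIndex, Fin.mk.injEq] at h
  ext
  split_ifs at h <;> omega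

theorem evenOddPerm_apply (hNn : N = n + n) (i j : Fin N) :
    evenOddPerm N n i j = if j = evenOddIndex hNn i then 1 else 0 := by
  simp [evenOddPerm, evenOddIndex, Fin.ext_iff]

theorem evenOddPerm_mul (hNn : N = n + n) (A : Matrix (Fin N) (Fin N) ℂ) :
    evenOddPerm N n * A = A.submatrix (evenOddIndex hNn) id := by
  ext i j
  simp [mul_apply, evenOddPerm_apply hNn]

theorem evenOddPerm_transpose_mul_self (hNn : N = n + n) :
    (evenOddPerm N n)ᵀ * evenOddPerm N n = 1 := by
  refine mul_eq_one_comm.mp ?_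
  ext i j
  simp [evenOddPerm_mul hNn, evenOddPerm_apply hNn, one_apply,
    (evenOddIndex_injective hNn).eq_iff]

end EvenOdd

theorem reindex_evenOddPerm_mul_vandermonde {N n : ℕ} (hNn : N = n + n) (α : ℂ) :
    reindex (finSumFinEquiv.trans (finCongr hNn.symm)).symm
        (finSumFinEquiv.trans (finCongr hNn.symm)).symm
        (evenOddPerm N n * vandermonde (fun k : Fin N => α ^ (k : ℕ))) =
      fromBlocks (vandermonde fun k : Fin n => α ^ (2 * (k : ℕ)))
        (diagonal (fun k : Fin n => α ^ (2 * (k : ℕ))) ^ n *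
          vandermonde fun k : Fin n => α ^ (2 * (k : ℕ)))
        ((vandermonde fun k : Fin n => α ^ (2 * (k : ℕ))) *
          diagonal fun l : Fin n => α ^ (l : ℕ))
        (α ^ n • (diagonal (fun k : Fin n => α ^ (2 * (k : ℕ))) ^ n *
          (vandermonde fun k : Fin n => α ^ (2 * (k : ℕ))) *
            diagonal fun l : Fin n => α ^ (l : ℕ))) := by
  rw [evenOddPerm_mul hNn]
  ext (i | i) (j | j) <;>
    simp [vandermonde_apply, evenOddIndex, diagonal_pow] <;> ring

theorem DVM_factorization_general (N n : ℕ)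
    (hNn : N = n + n) (α : ℂ) (hα : α ≠ 0) (w : Fin n → ℂ)
    (hw : ∀ z : ℂ, ∏ k : Fin n, (z - α ^ (2 * (k : ℕ))) =
      z ^ n + ∑ i : Fin n, w i * z ^ (i : ℕ)) :
    DVM N α =
      (evenOddPerm N n)ᵀ *
        Matrix.reindex (finSumFinEquiv.trans (finCongr hNn.symm))
          (finSumFinEquiv.trans (finCongr hNn.symm))
          (Matrix.fromBlocks (DVM n (α ^ 2)) 0 0 (DVM n (α ^ 2))) *
        Matrix.reindex (finSumFinEquiv.trans (finCongr hNn.symm))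
          (finSumFinEquiv.trans (finCongr hNn.symm))
          (Matrix.fromBlocks
            (Matrix.diagonal fun k : Fin n => (α ^ (2 * (k : ℕ)))⁻¹) 0
            0 (Matrix.diagonal fun k : Fin n => (α ^ (2 * (k : ℕ)))⁻¹)) *
        Matrix.reindex (finSumFinEquiv.trans (finCongr hNn.symm))
          (finSumFinEquiv.trans (finCongr hNn.symm))
          (Matrix.fromBlocks 1 (companion n w ^ n)
            (Matrix.diagonal fun l : Fin n => α ^ (l : ℕ))
            (α ^ n • (companion n w ^ n * Matrix.diagonal fun l : Fin n => α ^ (l : ℕ)))) *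
        Matrix.diagonal (fun k : Fin N => α ^ (k : ℕ)) := by
  set e := finSumFinEquiv.trans (finCongr hNn.symm)
  have hroots : ∀ k : Fin n,
      (α ^ (2 * (k : ℕ))) ^ n + ∑ i : Fin n, w i * (α ^ (2 * (k : ℕ))) ^ (i : ℕ) = 0 :=
    fun k => by rw [← hw]; exact prod_eq_zero (mem_univ k) (sub_self _)
  have hpow := ((vandermonde_semiconjBy_companion hroots).pow_right n).eq
  have hblocks :
      fromBlocks (DVM n (α ^ 2)) 0 0 (DVM n (α ^ 2)) *
        fromBlocks (diagonal fun k : Fin n => (α ^ (2 * (k : ℕ)))⁻¹) 0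
          0 (diagonal fun k : Fin n => (α ^ (2 * (k : ℕ)))⁻¹) *
        fromBlocks 1 (companion n w ^ n) (diagonal fun l : Fin n => α ^ (l : ℕ))
          (α ^ n • (companion n w ^ n * diagonal fun l : Fin n => α ^ (l : ℕ))) =
      reindex e.symm e.symm (evenOddPerm N n * vandermonde fun k : Fin N => α ^ (k : ℕ)) := by
    rw [reindex_evenOddPerm_mul_vandermonde hNn, fromBlocks_multiply, fromBlocks_multiply]
    simp only [DVM_sq_mul_diagonal_inv hα, Matrix.mul_zero, Matrix.zero_mul, add_zero, zero_add,
      Matrix.mul_one, Matrix.mul_smul, smul_zero, ← Matrix.mul_assoc, hpow]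
  calc DVM N α
        = (evenOddPerm N n)ᵀ * (evenOddPerm N n * vandermonde fun k : Fin N => α ^ (k : ℕ)) *
            diagonal fun k : Fin N => α ^ (k : ℕ) := by
        rw [DVM_eq_vandermonde_mul_diagonal, ← Matrix.mul_assoc,
          evenOddPerm_transpose_mul_self hNn, Matrix.one_mul]
    _ = _ := by
        rw [← (reindex e e).apply_symm_apply (evenOddPerm N n * _), reindex_symm, ← hblocks]
        simp only [reindex_apply, submatrix_mul_equiv, Matrix.mul_assoc]

theorem DVM_factorization (t : ℕ) (ht : 1 ≤ t) (N n : ℕ) (hN : N = 2 ^ t)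
    (hNn : N = n + n) (α : ℂ) (hα : α ≠ 0) (w : Fin n → ℂ)
    (hw : ∀ z : ℂ, ∏ k : Fin n, (z - α ^ (2 * (k : ℕ))) =
      z ^ n + ∑ i : Fin n, w i * z ^ (i : ℕ)) :
    DVM N α =
      (evenOddPerm N n)ᵀ *
        Matrix.reindex (finSumFinEquiv.trans (finCongr hNn.symm))
          (finSumFinEquiv.trans (finCongr hNn.symm))
          (Matrix.fromBlocks (DVM n (α ^ 2)) 0 0 (DVM n (α ^ 2))) *
        Matrix.reindex (finSumFinEquiv.trans (finCongr hNn.symm))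
          (finSumFinEquiv.trans (finCongr hNn.symm))
          (Matrix.fromBlocks
            (Matrix.diagonal fun k : Fin n => (α ^ (2 * (k : ℕ)))⁻¹) 0
            0 (Matrix.diagonal fun k : Fin n => (α ^ (2 * (k : ℕ)))⁻¹)) *
        Matrix.reindex (finSumFinEquiv.trans (finCongr hNn.symm))
          (finSumFinEquiv.trans (finCongr hNn.symm))
          (Matrix.fromBlocks 1 (companion n w ^ n)
            (Matrix.diagonal fun l : Fin n => α ^ (l : ℕ))
            (α ^ n • (companion n w ^ n * Matrix.diagonal fun l : Fin n => α ^ (l : ℕ)))) *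
        Matrix.diagonal (fun k : Fin N => α ^ (k : ℕ)) :=
  DVM_factorization_general N n hNn α hα w hw
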